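/- Let X be a set and F a nonempty proper subset of X, and let 𝓕 be the topology on X whose open sets are X itself together with all sets of the form Aᶜ ∩ F for nonempty A ⊆ X. Then for every nonempty subset A of X, the closure of A in the topology 𝓕 equals A ∪ Fᶜ. -/
import Mathlib

/-- Let `F` be a nonempty proper subset of `X` and let `𝓕` be the topology on `X`
whose open sets are `X` together with all sets `Aᶜ ∩ F` for nonempty `A ⊆ X`.
Then for every nonempty `A ⊆ X`, the `𝓕`-closure of `A` equals `A ∪ Fᶜ`. -/
theorem closure_in_F_topology_eq_union_compl {X : Type*} (F : Set X)
    (hFne : F.Nonempty) (hFproper : F ≠ Set.univ)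
    (T : TopologicalSpace X)
    (hT : ∀ U : Set X, T.IsOpen U ↔
      U = Set.univ ∨ ∃ A : Set X, A.Nonempty ∧ U = Aᶜ ∩ F) :
    ∀ A : Set X, A.Nonempty → closure A = A ∪ Fᶜ := by
  intro A hA
  letI := T
  apply subset_antisymm
  · apply closure_minimal Set.subset_union_left
    rw [← isOpen_compl_iff]
    exact (hT _).mpr (Or.inr ⟨A, hA, by rw [Set.compl_union, compl_compl]⟩)
  · have hcl : IsClosed (closure A) := isClosed_closure
    have hsub : A ⊆ closure A := subset_closure
    rw [← isOpen_compl_iff] at hcl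
    rcases (hT _).mp hcl with h | ⟨B, hB, hBe⟩
    · exfalso
      obtain ⟨x, hx⟩ := hA
      have : x ∈ (closure A)ᶜ := h ▸ Set.mem_univ x
      exact this (hsub hx)
    · have hcleq : closure A = B ∪ Fᶜ := by
        have := congrArg compl hBe
        rwa [compl_compl, Set.compl_inter, compl_compl] at this
      rw [hcleq] at hsub ⊢
      exact Set.union_subset (hsub.trans (by simp)) Set.subset_union_right
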